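/- Let X ⊆ {d,t,b,4,5}, and let r be an instance, with premise Γ₁ and conclusion Γ₂, of one of the rules weak, cont, ∨∘, □∘, ◇∘, ⊃∘, ∧•, ◇•, or □•. Then fm(Γ₁)⊃fm(Γ₂) is provable in HCK+X. -/
import Mathlib


/-! # Constructive modal logic: formulas and Hilbert systems -/

inductive Formula : Type
  | var : Nat → Formula
  | bot : Formula
  | and : Formula → Formula → Formula
  | or  : Formula → Formula → Formula
  | imp : Formula → Formula → Formula
  | box : Formula → Formula
  | dia : Formula → Formula
  deriving DecidableEq

/-- ⊤ abbreviates ⊥⊃⊥ -/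
def Formula.top : Formula := Formula.imp Formula.bot Formula.bot

/-- The five modal axioms d, t, b, 4, 5. -/
inductive Ax : Type
  | d | t | b | four | five
  deriving DecidableEq

/-- The formula scheme corresponding to each modal axiom. -/
def axForm : Ax → Formula → Formula
  | .d, A => Formula.imp (.box A) (.dia A)
  | .t, A => Formula.and (.imp A (.dia A)) (.imp (.box A) A)
  | .b, A => Formula.and (.imp A (.box (.dia A))) (.imp (.dia (.box A)) A)
  | .four, A => Formula.and (.imp (.dia (.dia A)) (.dia A)) (.imp (.box A) (.box (.box A)))
  | .five, A => Formula.and (.imp (.dia A) (.box (.dia A))) (.imp (.dia (.box A)) (.box A))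

/-- The Hilbert system HCK+X: a complete axiomatization of intuitionistic
propositional logic, plus k1 and k2, plus the modal axiom schemes in X,
closed under modus ponens and necessitation. -/
inductive Hck (X : Set Ax) : Formula → Prop
  | imp1 (A B : Formula) : Hck X (.imp A (.imp B A))
  | imp2 (A B C : Formula) :
      Hck X (.imp (.imp A (.imp B C)) (.imp (.imp A B) (.imp A C)))
  | andI (A B : Formula) : Hck X (.imp A (.imp B (.and A B)))
  | andE1 (A B : Formula) : Hck X (.imp (.and A B) A)
  | andE2 (A B : Formula) : Hck X (.imp (.and A B) B)
  | orI1 (A B : Formula) : Hck X (.imp A (.or A B))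
  | orI2 (A B : Formula) : Hck X (.imp B (.or A B))
  | orE (A B C : Formula) :
      Hck X (.imp (.imp A C) (.imp (.imp B C) (.imp (.or A B) C)))
  | exfalso (A : Formula) : Hck X (.imp .bot A)
  | k1 (A B : Formula) : Hck X (.imp (.box (.imp A B)) (.imp (.box A) (.box B)))
  | k2 (A B : Formula) : Hck X (.imp (.box (.imp A B)) (.imp (.dia A) (.dia B)))
  | ax {x : Ax} (A : Formula) : x ∈ X → Hck X (axForm x A)
  | mp {A B : Formula} : Hck X (.imp A B) → Hck X A → Hck X B
  | nec {A : Formula} : Hck X A → Hck X (.box A)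

/-! # Nested sequents -/

/-- LHS sequents: Φ ::= ∅ | A• | [Φ] | Φ,Φ -/
inductive LHS : Type
  | emp : LHS
  | fml : Formula → LHS
  | br : LHS → LHS
  | comma : LHS → LHS → LHS

/-- RHS sequents: Ψ ::= A∘ | [Φ,Ψ] -/
inductive RHS : Type
  | fml : Formula → RHS
  | br : LHS → RHS → RHS

/-- A full sequent: Φ,Ψ with exactly one output formula. -/
structure FullSeq where
  L : LHS
  R : RHS

/-- Corresponding formula of an LHS sequent. -/
def LHS.fm : LHS → Formula
  | .emp => Formula.top
  | .fml A => A
  | .br Φ => Formula.dia Φ.fm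
  | .comma Φ₁ Φ₂ => Formula.and Φ₁.fm Φ₂.fm

/-- Corresponding formula of an RHS sequent. -/
def RHS.fm : RHS → Formula
  | .fml A => A
  | .br Φ Ψ => Formula.box (Formula.imp Φ.fm Ψ.fm)

/-- Corresponding formula of a full sequent: fm(Φ,Ψ) = fm(Φ) ⊃ fm(Ψ). -/
def FullSeq.fm (S : FullSeq) : Formula := Formula.imp S.L.fm S.R.fm

/-! # Contexts -/

/-- An output context: Γ₁•,[Γ₂•,[…,[Γₙ•,{ }]…]]. -/
inductive OutCtx : Type
  | hole : LHS → OutCtx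
  | cons : LHS → OutCtx → OutCtx

/-- Filling an output context with an LHS sequent yields an LHS sequent. -/
def OutCtx.fillL : OutCtx → LHS → LHS
  | .hole Φ, Δ => Φ.comma Δ
  | .cons Φ C, Δ => Φ.comma (LHS.br (C.fillL Δ))

/-- Filling an output context with nothing (∅) yields an LHS sequent. -/
def OutCtx.fillE : OutCtx → LHS
  | .hole Φ => Φ
  | .cons Φ C => Φ.comma (LHS.br C.fillE)

/-- Filling an output context with an RHS sequent yields a full sequent. -/
def OutCtx.fillR : OutCtx → RHS → FullSeq
  | .hole Φ, Ψ => ⟨Φ, Ψ⟩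
  | .cons Φ C, Ψ => ⟨Φ, RHS.br (C.fillR Ψ).L (C.fillR Ψ).R⟩

/-- Filling an output context with a full sequent yields a full sequent. -/
def OutCtx.fillF : OutCtx → FullSeq → FullSeq
  | .hole Φ, S => ⟨Φ.comma S.L, S.R⟩
  | .cons Φ C, S => ⟨Φ, RHS.br (C.fillF S).L (C.fillF S).R⟩

/-- Depth of an output context: number of brackets around the hole. -/
def OutCtx.depth : OutCtx → Nat
  | .hole _ => 0
  | .cons _ C => C.depth + 1

def OutCtx.addL : LHS → OutCtx → OutCtx
  | Φ, .hole Φ' => .hole (Φ.comma Φ')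
  | Φ, .cons Φ' C => .cons (Φ.comma Φ') C

/-- Composition of output contexts (plugging one into the hole of the other). -/
def OutCtx.comp : OutCtx → OutCtx → OutCtx
  | .hole Φ, C => OutCtx.addL Φ C
  | .cons Φ C, C' => .cons Φ (C.comp C')

/-- An input context Γ'{Λ{ },Π∘} with Γ'{ }, Λ{ } output contexts, Π∘ an RHS
sequent.  Filled with an LHS sequent it yields a full sequent. -/
structure InCtx where
  outer : OutCtx
  inner : OutCtx
  out : RHS

/-- Filling an input context with an LHS sequent. -/
def InCtx.fill (G : InCtx) (Δ : LHS) : FullSeq :=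
  G.outer.fillF ⟨G.inner.fillL Δ, G.out⟩

/-- Output pruning Γ↓{ } = Γ'{Λ{ }} of an input context Γ'{Λ{ },Π∘}. -/
def InCtx.prune (G : InCtx) : OutCtx := G.outer.comp G.inner

/-- Depth of an input context. -/
def InCtx.depth (G : InCtx) : Nat := G.outer.depth + G.inner.depth

/-- [Φ]ⁿ : n brackets around an LHS sequent. -/
def LHS.brn : Nat → LHS → LHS
  | 0, Φ => Φ
  | n+1, Φ => LHS.br (LHS.brn n Φ)

/-- [Σ]ⁿ : n brackets around a full sequent (as a full sequent). -/
def FullSeq.nest : Nat → FullSeq → FullSeq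
  | 0, S => S
  | n+1, S => ⟨LHS.emp, RHS.br (FullSeq.nest n S).L (FullSeq.nest n S).R⟩

/-! # Equivalence of sequents (associativity/commutativity/unit of comma) -/

inductive SEqL : LHS → LHS → Prop
  | refl (Φ : LHS) : SEqL Φ Φ
  | symm {a b : LHS} : SEqL a b → SEqL b a
  | trans {a b c : LHS} : SEqL a b → SEqL b c → SEqL a c
  | comm (a b : LHS) : SEqL (a.comma b) (b.comma a)
  | assoc (a b c : LHS) : SEqL ((a.comma b).comma c) (a.comma (b.comma c))
  | unit (a : LHS) : SEqL (LHS.emp.comma a) a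
  | congComma {a a' b b' : LHS} : SEqL a a' → SEqL b b' → SEqL (a.comma b) (a'.comma b')
  | congBr {a a' : LHS} : SEqL a a' → SEqL a.br a'.br

inductive SEqR : RHS → RHS → Prop
  | refl (Ψ : RHS) : SEqR Ψ Ψ
  | symm {a b : RHS} : SEqR a b → SEqR b a
  | trans {a b c : RHS} : SEqR a b → SEqR b c → SEqR a c
  | congBr {Φ Φ' : LHS} {Ψ Ψ' : RHS} :
      SEqL Φ Φ' → SEqR Ψ Ψ' → SEqR (RHS.br Φ Ψ) (RHS.br Φ' Ψ')

def SEq (S T : FullSeq) : Prop := SEqL S.L T.L ∧ SEqR S.R T.R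

/-! # Inference rules -/

inductive RuleName : Type
  | id | botL | andL | andR | orL | orR | impL | impR
  | boxL | boxR | diaL | diaHatL | diaR | cont
  | weak | cut | nec
  | dDiaR | dBoxL | tDiaR | tBoxL | fourDiaR | fourBoxL
  | dSt | tSt | bSt | fourSt | fiveSt
  | s4R | s4L | s4Rdia | s4Lbox
  | sbSt | s5St | s5bSt | sb5St
  deriving DecidableEq

/-- Rule instances: `Step r prems concl` means that inferring the full sequent
`concl` from the list of full sequents `prems` is an instance of the rule `r`. -/
inductive Step : RuleName → List FullSeq → FullSeq → Prop
  /- id: Γ{a•,a∘} -/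
  | id (Γ : OutCtx) (a : Nat) :
      Step .id [] (Γ.fillF ⟨.fml (.var a), .fml (.var a)⟩)
  /- ⊥•: Γ{⊥•,Π∘} -/
  | botL (Γ : OutCtx) (Pn : RHS) :
      Step .botL [] (Γ.fillF ⟨.fml .bot, Pn⟩)
  /- ∧•: from Γ{A•,B•} infer Γ{(A∧B)•} -/
  | andL (Γ : InCtx) (A B : Formula) :
      Step .andL [Γ.fill ((LHS.fml A).comma (.fml B))] (Γ.fill (.fml (A.and B)))
  /- ∧∘: from Γ{A∘} and Γ{B∘} infer Γ{(A∧B)∘} -/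
  | andR (Γ : OutCtx) (A B : Formula) :
      Step .andR [Γ.fillR (.fml A), Γ.fillR (.fml B)] (Γ.fillR (.fml (A.and B)))
  /- ∨•: from Γ{A•,Π∘} and Γ{B•,Π∘} infer Γ{(A∨B)•,Π∘} -/
  | orL (Γ : OutCtx) (Pn : RHS) (A B : Formula) :
      Step .orL [Γ.fillF ⟨.fml A, Pn⟩, Γ.fillF ⟨.fml B, Pn⟩]
        (Γ.fillF ⟨.fml (A.or B), Pn⟩)
  /- ∨∘: from Γ{A∘} (or Γ{B∘}) infer Γ{(A∨B)∘} -/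
  | orR1 (Γ : OutCtx) (A B : Formula) :
      Step .orR [Γ.fillR (.fml A)] (Γ.fillR (.fml (A.or B)))
  | orR2 (Γ : OutCtx) (A B : Formula) :
      Step .orR [Γ.fillR (.fml B)] (Γ.fillR (.fml (A.or B)))
  /- ⊃•: from Γ↓{A∘} and Γ{B•} infer Γ{(A⊃B)•} -/
  | impL (Γ : InCtx) (A B : Formula) :
      Step .impL [Γ.prune.fillR (.fml A), Γ.fill (.fml B)] (Γ.fill (.fml (A.imp B)))
  /- ⊃∘: from Γ{A•,B∘} infer Γ{(A⊃B)∘} -/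
  | impR (Γ : OutCtx) (A B : Formula) :
      Step .impR [Γ.fillF ⟨.fml A, .fml B⟩] (Γ.fillR (.fml (A.imp B)))
  /- □•: from Γ{[A•,Δ]} infer Γ{(□A)•,[Δ]}, output elsewhere resp. in Δ -/
  | boxLIn (Γ : InCtx) (Δ : LHS) (A : Formula) :
      Step .boxL [Γ.fill (LHS.br ((LHS.fml A).comma Δ))]
        (Γ.fill ((LHS.fml A.box).comma Δ.br))
  | boxLOut (Γ : OutCtx) (Δ : FullSeq) (A : Formula) :
      Step .boxL [Γ.fillR (.br ((LHS.fml A).comma Δ.L) Δ.R)]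
        (Γ.fillF ⟨.fml A.box, .br Δ.L Δ.R⟩)
  /- □∘: from Γ{[A∘]} infer Γ{(□A)∘} -/
  | boxR (Γ : OutCtx) (A : Formula) :
      Step .boxR [Γ.fillR (.br .emp (.fml A))] (Γ.fillR (.fml A.box))
  /- ◇•: from Γ{[A•]} infer Γ{(◇A)•} -/
  | diaL (Γ : InCtx) (A : Formula) :
      Step .diaL [Γ.fill (LHS.br (.fml A))] (Γ.fill (.fml A.dia))
  /- ◇̂•: from Γ{[A•],Π∘} infer Γ{(◇A)•,Π∘} -/
  | diaHatL (Γ : OutCtx) (Pn : RHS) (A : Formula) :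
      Step .diaHatL [Γ.fillF ⟨LHS.br (.fml A), Pn⟩] (Γ.fillF ⟨.fml A.dia, Pn⟩)
  /- ◇∘: from Γ{[A∘,Δ]} infer Γ{(◇A)∘,[Δ]} -/
  | diaR (Γ : OutCtx) (Δ : LHS) (A : Formula) :
      Step .diaR [Γ.fillR (.br Δ (.fml A))] (Γ.fillF ⟨Δ.br, .fml A.dia⟩)
  /- cont: from Γ{Δ•,Δ•} infer Γ{Δ•} -/
  | cont (Γ : InCtx) (Δ : LHS) :
      Step .cont [Γ.fill (Δ.comma Δ)] (Γ.fill Δ)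
  /- weak: from Γ{∅} infer Γ{Δ•} -/
  | weak (Γ : InCtx) (Δ : LHS) :
      Step .weak [Γ.fill .emp] (Γ.fill Δ)
  /- cut: from Γ↓{A∘} and Γ{A•} infer Γ{∅} -/
  | cut (Γ : InCtx) (A : Formula) :
      Step .cut [Γ.prune.fillR (.fml A), Γ.fill (.fml A)] (Γ.fill .emp)
  /- nec: from Γ infer [Γ] -/
  | nec (S : FullSeq) :
      Step .nec [S] ⟨.emp, .br S.L S.R⟩
  /- ◇∘d: from Γ{[A∘]} infer Γ{(◇A)∘} -/
  | dDiaR (Γ : OutCtx) (A : Formula) :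
      Step .dDiaR [Γ.fillR (.br .emp (.fml A))] (Γ.fillR (.fml A.dia))
  /- □•d: from Γ{[A•]} infer Γ{(□A)•} -/
  | dBoxL (Γ : InCtx) (A : Formula) :
      Step .dBoxL [Γ.fill (LHS.br (.fml A))] (Γ.fill (.fml A.box))
  /- ◇∘t: from Γ{A∘} infer Γ{(◇A)∘} -/
  | tDiaR (Γ : OutCtx) (A : Formula) :
      Step .tDiaR [Γ.fillR (.fml A)] (Γ.fillR (.fml A.dia))
  /- □•t: from Γ{A•} infer Γ{(□A)•} -/
  | tBoxL (Γ : InCtx) (A : Formula) :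
      Step .tBoxL [Γ.fill (.fml A)] (Γ.fill (.fml A.box))
  /- ◇∘4: from Γ{[(◇A)∘,Δ]} infer Γ{(◇A)∘,[Δ]} -/
  | fourDiaR (Γ : OutCtx) (Δ : LHS) (A : Formula) :
      Step .fourDiaR [Γ.fillR (.br Δ (.fml A.dia))] (Γ.fillF ⟨Δ.br, .fml A.dia⟩)
  /- □•4: from Γ{[(□A)•,Δ]} infer Γ{(□A)•,[Δ]} -/
  | fourBoxLIn (Γ : InCtx) (Δ : LHS) (A : Formula) :
      Step .fourBoxL [Γ.fill (LHS.br ((LHS.fml A.box).comma Δ))]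
        (Γ.fill ((LHS.fml A.box).comma Δ.br))
  | fourBoxLOut (Γ : OutCtx) (Δ : FullSeq) (A : Formula) :
      Step .fourBoxL [Γ.fillR (.br ((LHS.fml A.box).comma Δ.L) Δ.R)]
        (Γ.fillF ⟨.fml A.box, .br Δ.L Δ.R⟩)
  /- d•: from Γ{[∅]} infer Γ{∅} -/
  | dSt (Γ : InCtx) :
      Step .dSt [Γ.fill (LHS.br .emp)] (Γ.fill .emp)
  /- t•: from Γ{[Σ]} infer Γ{Σ} -/
  | tStIn (Γ : InCtx) (Sg : LHS) :
      Step .tSt [Γ.fill Sg.br] (Γ.fill Sg)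
  | tStOut (Γ : OutCtx) (Sg : FullSeq) :
      Step .tSt [Γ.fillR (.br Sg.L Sg.R)] (Γ.fillF Sg)
  /- 4•: from Γ{[Σ]} infer Γ{[[Σ]]} -/
  | fourStIn (Γ : InCtx) (Sg : LHS) :
      Step .fourSt [Γ.fill Sg.br] (Γ.fill Sg.br.br)
  | fourStOut (Γ : OutCtx) (Sg : FullSeq) :
      Step .fourSt [Γ.fillR (.br Sg.L Sg.R)] (Γ.fillR (.br .emp (.br Sg.L Sg.R)))
  /- b•: from Γ{[[Σ],Δ]} infer Γ{Σ,[Δ]} -/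
  | bStIn (Γ : InCtx) (Sg Δ : LHS) :
      Step .bSt [Γ.fill (LHS.br (Sg.br.comma Δ))] (Γ.fill (Sg.comma Δ.br))
  | bStSig (Γ : OutCtx) (Sg : FullSeq) (Δ : LHS) :
      Step .bSt [Γ.fillR (.br Δ (.br Sg.L Sg.R))] (Γ.fillF ⟨Sg.L.comma Δ.br, Sg.R⟩)
  | bStDel (Γ : OutCtx) (Sg : LHS) (Δ : FullSeq) :
      Step .bSt [Γ.fillR (.br (Sg.br.comma Δ.L) Δ.R)] (Γ.fillF ⟨Sg, .br Δ.L Δ.R⟩)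
  /- 5•: from Γ{[[Σ],Δ]} infer Γ{[Σ],[Δ]} -/
  | fiveStIn (Γ : InCtx) (Sg Δ : LHS) :
      Step .fiveSt [Γ.fill (LHS.br (Sg.br.comma Δ))] (Γ.fill (Sg.br.comma Δ.br))
  | fiveStSig (Γ : OutCtx) (Sg : FullSeq) (Δ : LHS) :
      Step .fiveSt [Γ.fillR (.br Δ (.br Sg.L Sg.R))] (Γ.fillF ⟨Δ.br, .br Sg.L Sg.R⟩)
  | fiveStDel (Γ : OutCtx) (Sg : LHS) (Δ : FullSeq) :
      Step .fiveSt [Γ.fillR (.br (Sg.br.comma Δ.L) Δ.R)] (Γ.fillF ⟨Sg.br, .br Δ.L Δ.R⟩)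
  /- s4∘: from Γ{Δ{(◇A)∘}} infer Γ{(◇A)∘,Δ{∅}} -/
  | s4R (Γ Δ : OutCtx) (A : Formula) :
      Step .s4R [Γ.fillF (Δ.fillR (.fml A.dia))] (Γ.fillF ⟨Δ.fillE, .fml A.dia⟩)
  /- s4•: from Γ{Δ{(□A)•}} infer Γ{(□A)•,Δ{∅}} -/
  | s4LIn (Γ : InCtx) (Δ : OutCtx) (A : Formula) :
      Step .s4L [Γ.fill (Δ.fillL (.fml A.box))] (Γ.fill ((LHS.fml A.box).comma Δ.fillE))
  | s4LOut (Γ : OutCtx) (Δ : InCtx) (A : Formula) :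
      Step .s4L [Γ.fillF (Δ.fill (.fml A.box))]
        (Γ.fillF ⟨(LHS.fml A.box).comma (Δ.fill .emp).L, (Δ.fill .emp).R⟩)
  /- s4∘◇: from Γ{[Δ{A∘}]} infer Γ{(◇A)∘,[Δ{∅}]} -/
  | s4Rdia (Γ Δ : OutCtx) (A : Formula) :
      Step .s4Rdia [Γ.fillR (.br (Δ.fillR (.fml A)).L (Δ.fillR (.fml A)).R)]
        (Γ.fillF ⟨Δ.fillE.br, .fml A.dia⟩)
  /- s4•□: from Γ{[Δ{A•}]} infer Γ{(□A)•,[Δ{∅}]} -/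
  | s4LboxIn (Γ : InCtx) (Δ : OutCtx) (A : Formula) :
      Step .s4Lbox [Γ.fill (LHS.br (Δ.fillL (.fml A)))]
        (Γ.fill ((LHS.fml A.box).comma Δ.fillE.br))
  | s4LboxOut (Γ : OutCtx) (Δ : InCtx) (A : Formula) :
      Step .s4Lbox [Γ.fillR (.br (Δ.fill (.fml A)).L (Δ.fill (.fml A)).R)]
        (Γ.fillF ⟨.fml A.box, .br (Δ.fill .emp).L (Δ.fill .emp).R⟩)
  /- sb•: from Γ{Δ{[Σ]ⁿ}} infer Γ{Σ,Δ{∅}}, n the depth of Δ{ } -/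
  | sbStIn (Γ : InCtx) (Δ : OutCtx) (Sg : LHS) :
      Step .sbSt [Γ.fill (Δ.fillL (LHS.brn Δ.depth Sg))] (Γ.fill (Sg.comma Δ.fillE))
  | sbStMid (Γ : OutCtx) (Δ : InCtx) (Sg : LHS) :
      Step .sbSt [Γ.fillF (Δ.fill (LHS.brn Δ.depth Sg))]
        (Γ.fillF ⟨Sg.comma (Δ.fill .emp).L, (Δ.fill .emp).R⟩)
  | sbStOut (Γ Δ : OutCtx) (Sg : FullSeq) :
      Step .sbSt [Γ.fillF (Δ.fillF (FullSeq.nest Δ.depth Sg))]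
        (Γ.fillF ⟨Sg.L.comma Δ.fillE, Sg.R⟩)
  /- s5•: from Γ{Δ{[Σ]}} infer Γ{[Σ],Δ{∅}} -/
  | s5StIn (Γ : InCtx) (Δ : OutCtx) (Sg : LHS) :
      Step .s5St [Γ.fill (Δ.fillL Sg.br)] (Γ.fill (Sg.br.comma Δ.fillE))
  | s5StMid (Γ : OutCtx) (Δ : InCtx) (Sg : LHS) :
      Step .s5St [Γ.fillF (Δ.fill Sg.br)]
        (Γ.fillF ⟨Sg.br.comma (Δ.fill .emp).L, (Δ.fill .emp).R⟩)
  | s5StOut (Γ Δ : OutCtx) (Sg : FullSeq) :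
      Step .s5St [Γ.fillF (Δ.fillF ⟨.emp, .br Sg.L Sg.R⟩)]
        (Γ.fillF ⟨Δ.fillE, .br Sg.L Sg.R⟩)
  /- s5b•: from Γ{Δ{[Σ]ᵏ}} infer Γ{Σ,Δ{∅}}, 1 ≤ k ≤ depth of Δ{ } -/
  | s5bStIn (Γ : InCtx) (Δ : OutCtx) (Sg : LHS) (k : Nat)
      (h1 : 1 ≤ k) (h2 : k ≤ Δ.depth) :
      Step .s5bSt [Γ.fill (Δ.fillL (LHS.brn k Sg))] (Γ.fill (Sg.comma Δ.fillE))
  | s5bStMid (Γ : OutCtx) (Δ : InCtx) (Sg : LHS) (k : Nat)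
      (h1 : 1 ≤ k) (h2 : k ≤ Δ.depth) :
      Step .s5bSt [Γ.fillF (Δ.fill (LHS.brn k Sg))]
        (Γ.fillF ⟨Sg.comma (Δ.fill .emp).L, (Δ.fill .emp).R⟩)
  | s5bStOut (Γ Δ : OutCtx) (Sg : FullSeq) (k : Nat)
      (h1 : 1 ≤ k) (h2 : k ≤ Δ.depth) :
      Step .s5bSt [Γ.fillF (Δ.fillF (FullSeq.nest k Sg))]
        (Γ.fillF ⟨Sg.L.comma Δ.fillE, Sg.R⟩)
  /- sb5•: from Γ{Δ{[Σ]ᵏ}} infer Γ{[Σ],Δ{∅}}, 1 ≤ k ≤ depth of Δ{ } -/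
  | sb5StIn (Γ : InCtx) (Δ : OutCtx) (Sg : LHS) (k : Nat)
      (h1 : 1 ≤ k) (h2 : k ≤ Δ.depth) :
      Step .sb5St [Γ.fill (Δ.fillL (LHS.brn k Sg))] (Γ.fill (Sg.br.comma Δ.fillE))
  | sb5StMid (Γ : OutCtx) (Δ : InCtx) (Sg : LHS) (k : Nat)
      (h1 : 1 ≤ k) (h2 : k ≤ Δ.depth) :
      Step .sb5St [Γ.fillF (Δ.fill (LHS.brn k Sg))]
        (Γ.fillF ⟨Sg.br.comma (Δ.fill .emp).L, (Δ.fill .emp).R⟩)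
  | sb5StOut (Γ Δ : OutCtx) (Sg : FullSeq) (k : Nat)
      (h1 : 1 ≤ k) (h2 : k ≤ Δ.depth) :
      Step .sb5St [Γ.fillF (Δ.fillF (FullSeq.nest k Sg))]
        (Γ.fillF ⟨Δ.fillE, .br Sg.L Sg.R⟩)

/-! # Derivations -/

/-- `Deriv R n S`: the full sequent S has a derivation of height at most n
using the rules in R (sequents are treated up to AC-unit equivalence of
comma). -/
inductive Deriv (R : Set RuleName) : Nat → FullSeq → Prop
  | step {r : RuleName} {prems : List FullSeq} {S S' : FullSeq} {n : Nat} :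
      r ∈ R → Step r prems S → (∀ P ∈ prems, Deriv R n P) → SEq S S' →
      Deriv R (n+1) S'

/-- Provability in the system given by the rule set R. -/
def Provable (R : Set RuleName) (S : FullSeq) : Prop := ∃ n, Deriv R n S

/-- Derivations from a set of hypotheses (for derivability of rules). -/
inductive DerivFrom (R : Set RuleName) (H : Set FullSeq) : FullSeq → Prop
  | hyp {S S' : FullSeq} : S ∈ H → SEq S S' → DerivFrom R H S'
  | step {r : RuleName} {prems : List FullSeq} {S S' : FullSeq} :
      r ∈ R → Step r prems S → (∀ P ∈ prems, DerivFrom R H P) → SEq S S' →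
      DerivFrom R H S'

/-! # Rule sets -/

/-- The rules of NCK. -/
def NCKrules : Set RuleName :=
  {.id, .botL, .andL, .andR, .orL, .orR, .impL, .impR, .boxL, .boxR,
   .diaL, .diaR, .cont}

/-- The rules of NCK' (◇• replaced by ◇̂•). -/
def NCKP : Set RuleName :=
  {.id, .botL, .andL, .andR, .orL, .orR, .impL, .impR, .boxL, .boxR,
   .diaHatL, .diaR, .cont}

/-- X^{↓}: the logical ◇∘- and □•-rules for the axioms in X ⊆ {d,t,4}. -/
def lgRules (X : Set Ax) : Set RuleName := fun r =>
  (Ax.d ∈ X ∧ (r = .dDiaR ∨ r = .dBoxL)) ∨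
  (Ax.t ∈ X ∧ (r = .tDiaR ∨ r = .tBoxL)) ∨
  (Ax.four ∈ X ∧ (r = .fourDiaR ∨ r = .fourBoxL))

/-- The structural rule corresponding to a modal axiom. -/
def stRule : Ax → RuleName
  | .d => .dSt
  | .t => .tSt
  | .b => .bSt
  | .four => .fourSt
  | .five => .fiveSt

/-- Y•: the structural rules for the axioms in Y. -/
def stRules (Y : Set Ax) : Set RuleName := fun r => ∃ y ∈ Y, r = stRule y

/-- X^{↓}_s : the super variant of X^{↓}. -/
def lgRulesS (X : Set Ax) : Set RuleName := fun r =>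
  (r ∈ lgRules X ∧ r ≠ .fourDiaR ∧ r ≠ .fourBoxL) ∨
  (Ax.four ∈ X ∧ (r = .s4R ∨ r = .s4L ∨ r = .s4Rdia ∨ r = .s4Lbox))

/-- Y•_s : the super variant of Y•. -/
def stRulesS (Y : Set Ax) : Set RuleName := fun r =>
  (r ∈ stRules Y ∧ r ≠ .bSt ∧ r ≠ .fiveSt) ∨
  (Ax.b ∈ Y ∧ Ax.five ∉ Y ∧ r = .sbSt) ∨
  (Ax.five ∈ Y ∧ Ax.b ∉ Y ∧ r = .s5St) ∨
  (Ax.b ∈ Y ∧ Ax.five ∈ Y ∧ (r = .s5bSt ∨ r = .sb5St))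

/-- A safe pair of axiom sets. -/
def SafePair (X Y : Set Ax) : Prop :=
  X ⊆ {Ax.t, Ax.four} ∧ Y ⊆ {Ax.d, Ax.b, Ax.five} ∧
  (Ax.t ∈ X → Ax.five ∈ Y → Ax.b ∈ Y) ∧
  ((Ax.b ∈ Y ∨ Ax.five ∈ Y) → Ax.four ∈ X)

section Aux
open Formula

/-- Derivations from a list of hypotheses. -/
inductive HD (X : Set Ax) : List Formula → Formula → Prop
  | hyp {Γ A} : A ∈ Γ → HD X Γ A
  | thm {Γ A} : Hck X A → HD X Γ A
  | mp {Γ A B} : HD X Γ (A.imp B) → HD X Γ A → HD X Γ B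

theorem hck_id (X : Set Ax) (A : Formula) : Hck X (A.imp A) :=
  (((Hck.imp2 A (A.imp A) A).mp (Hck.imp1 A (A.imp A)))).mp (Hck.imp1 A A)

theorem HD.ded_aux {X B Γ'} (h : HD X Γ' B) :
    ∀ {A Γ}, Γ' = A :: Γ → HD X Γ (A.imp B) := by
  induction h with
  | hyp hm =>
    intro A Γ hΓ; subst hΓ
    rcases List.mem_cons.mp hm with h1 | h2
    · cases h1; exact HD.thm (hck_id X _)
    · exact HD.mp (HD.thm (Hck.imp1 _ _)) (HD.hyp h2)
  | thm h => intro A Γ _; exact HD.mp (HD.thm (Hck.imp1 _ _)) (HD.thm h)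
  | mp _ _ ih1 ih2 =>
    intro A Γ hΓ
    exact HD.mp (HD.mp (HD.thm (Hck.imp2 _ _ _)) (ih1 hΓ)) (ih2 hΓ)

theorem HD.ded {X Γ A B} (h : HD X (A :: Γ) B) : HD X Γ (A.imp B) :=
  HD.ded_aux h rfl

theorem HD.toHck_aux {X Γ A} (h : HD X Γ A) : Γ = [] → Hck X A := by
  induction h with
  | hyp hm => intro e; subst e; simp at hm
  | thm h => intro _; exact h
  | mp _ _ ih1 ih2 => intro e; exact (ih1 e).mp (ih2 e)

theorem HD.toHck {X A} (h : HD X [] A) : Hck X A := HD.toHck_aux h rfl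

theorem HD.andI' {X Γ} {A B : Formula} (a : HD X Γ A) (b : HD X Γ B) :
    HD X Γ (A.and B) := ((HD.thm (Hck.andI A B)).mp a).mp b
theorem HD.and1 {X Γ} {A B : Formula} (h : HD X Γ (A.and B)) : HD X Γ A :=
  (HD.thm (Hck.andE1 A B)).mp h
theorem HD.and2 {X Γ} {A B : Formula} (h : HD X Γ (A.and B)) : HD X Γ B :=
  (HD.thm (Hck.andE2 A B)).mp h

theorem imp_trans {X} {A B C : Formula} (h1 : Hck X (A.imp B))
    (h2 : Hck X (B.imp C)) : Hck X (A.imp C) :=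
  HD.toHck (HD.ded ((HD.thm h2).mp ((HD.thm h1).mp (HD.hyp (.head _)))))

theorem boxMono {X} {A B : Formula} (h : Hck X (A.imp B)) :
    Hck X (A.box.imp B.box) := (Hck.k1 A B).mp (Hck.nec h)
theorem diaMono {X} {A B : Formula} (h : Hck X (A.imp B)) :
    Hck X (A.dia.imp B.dia) := (Hck.k2 A B).mp (Hck.nec h)

theorem impMonoR {X} {P A B : Formula} (h : Hck X (A.imp B)) :
    Hck X ((P.imp A).imp (P.imp B)) :=
  HD.toHck (HD.ded (HD.ded ((HD.thm h).mp
    ((HD.hyp (.tail _ (.head _))).mp (HD.hyp (.head _))))))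

theorem impAntiL {X} {L' L R : Formula} (h : Hck X (L'.imp L)) :
    Hck X ((L.imp R).imp (L'.imp R)) :=
  HD.toHck (HD.ded (HD.ded ((HD.hyp (.tail _ (.head _))).mp
    ((HD.thm h).mp (HD.hyp (.head _))))))

theorem andMonoR {X} {P A B : Formula} (h : Hck X (A.imp B)) :
    Hck X ((P.and A).imp (P.and B)) :=
  HD.toHck (HD.ded (HD.andI' (HD.and1 (HD.hyp (.head _)))
    ((HD.thm h).mp (HD.and2 (HD.hyp (.head _))))))

theorem holeFF {X} {Φ L R L' R' : Formula}
    (h : Hck X ((L.imp R).imp (L'.imp R'))) :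
    Hck X (((Φ.and L).imp R).imp ((Φ.and L').imp R')) :=
  HD.toHck (HD.ded (HD.ded (HD.mp
    ((HD.thm h).mp (HD.ded ((HD.hyp (.tail _ (.tail _ (.head _)))).mp
      (HD.andI' (HD.and1 (HD.hyp (.tail _ (.head _)))) (HD.hyp (.head _))))))
    (HD.and2 (HD.hyp (.head _))))))

theorem holeRF {X} {Φ Ψ L R : Formula} (h : Hck X (Ψ.imp (L.imp R))) :
    Hck X ((Φ.imp Ψ).imp ((Φ.and L).imp R)) :=
  HD.toHck (HD.ded (HD.ded (HD.mp
    ((HD.thm h).mp ((HD.hyp (.tail _ (.head _))).mp (HD.and1 (HD.hyp (.head _)))))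
    (HD.and2 (HD.hyp (.head _))))))

theorem holeFR {X} {Φ Ψ L R : Formula} (h : Hck X ((L.imp R).imp Ψ)) :
    Hck X (((Φ.and L).imp R).imp (Φ.imp Ψ)) :=
  HD.toHck (HD.ded (HD.ded ((HD.thm h).mp
    (HD.ded ((HD.hyp (.tail _ (.tail _ (.head _)))).mp
      (HD.andI' (HD.hyp (.tail _ (.head _))) (HD.hyp (.head _))))))))

theorem curryT (X : Set Ax) (A L R : Formula) :
    Hck X (((A.and L).imp R).imp (A.imp (L.imp R))) :=
  HD.toHck (HD.ded (HD.ded (HD.ded ((HD.hyp (.tail _ (.tail _ (.head _)))).mp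
    (HD.andI' (HD.hyp (.tail _ (.head _))) (HD.hyp (.head _)))))))

theorem uncurryT {X} {P Q R : Formula} (h : Hck X (P.imp (Q.imp R))) :
    Hck X ((P.and Q).imp R) :=
  HD.toHck (HD.ded (HD.mp ((HD.thm h).mp (HD.and1 (HD.hyp (.head _))))
    (HD.and2 (HD.hyp (.head _)))))

theorem toTop (X : Set Ax) (A : Formula) : Hck X (A.imp Formula.top) :=
  HD.toHck (HD.ded (HD.thm (hck_id X Formula.bot)))

theorem topElimImp (X : Set Ax) (A : Formula) :
    Hck X ((Formula.top.imp A).imp A) :=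
  HD.toHck (HD.ded ((HD.hyp (.head _)).mp (HD.thm (hck_id X Formula.bot))))

theorem dupT (X : Set Ax) (A : Formula) : Hck X (A.imp (A.and A)) :=
  HD.toHck (HD.ded (HD.andI' (HD.hyp (.head _)) (HD.hyp (.head _))))

/-- cons-case helper: (Φ ⊃ □A) ⊃ (Φ ⊃ □B) from A ⊃ B. -/
theorem impBoxMono {X} {P A B : Formula} (h : Hck X (A.imp B)) :
    Hck X ((P.imp A.box).imp (P.imp B.box)) := impMonoR (boxMono h)

theorem fillF_mono {X} (C : OutCtx) {S S' : FullSeq}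
    (h : Hck X (S.fm.imp S'.fm)) :
    Hck X ((C.fillF S).fm.imp (C.fillF S').fm) := by
  induction C with
  | hole Φ => exact holeFF h
  | cons Φ C ih => exact impBoxMono ih

theorem fillR_mono {X} (C : OutCtx) {Ψ Ψ' : RHS}
    (h : Hck X (Ψ.fm.imp Ψ'.fm)) :
    Hck X ((C.fillR Ψ).fm.imp (C.fillR Ψ').fm) := by
  induction C with
  | hole Φ => exact impMonoR h
  | cons Φ C ih => exact impBoxMono ih

theorem fillRtoF {X} (C : OutCtx) {Ψ : RHS} {S : FullSeq}
    (h : Hck X (Ψ.fm.imp S.fm)) :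
    Hck X ((C.fillR Ψ).fm.imp (C.fillF S).fm) := by
  induction C with
  | hole Φ => exact holeRF h
  | cons Φ C ih => exact impBoxMono ih

theorem fillFtoR {X} (C : OutCtx) {S : FullSeq} {Ψ : RHS}
    (h : Hck X (S.fm.imp Ψ.fm)) :
    Hck X ((C.fillF S).fm.imp (C.fillR Ψ).fm) := by
  induction C with
  | hole Φ => exact holeFR h
  | cons Φ C ih => exact impBoxMono ih

theorem fillL_mono {X} (C : OutCtx) {Δ Δ' : LHS}
    (h : Hck X (Δ.fm.imp Δ'.fm)) :
    Hck X ((C.fillL Δ).fm.imp (C.fillL Δ').fm) := by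
  induction C with
  | hole Φ => exact andMonoR h
  | cons Φ C ih => exact andMonoR (diaMono ih)

theorem inCtx_anti {X} (G : InCtx) {Δ Δ' : LHS}
    (h : Hck X (Δ'.fm.imp Δ.fm)) :
    Hck X ((G.fill Δ).fm.imp (G.fill Δ').fm) :=
  fillF_mono G.outer (impAntiL (fillL_mono G.inner h))

end Aux
/-- Lemma 4.6: for any instance, with premise Γ₁ and conclusion
Γ₂, of one of the rules weak, cont, ∨∘, □∘, ◇∘, ⊃∘, ∧•, ◇•, □•, the formula
fm(Γ₁)⊃fm(Γ₂) is provable in HCK+X. -/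
theorem statement8 (X : Set Ax) (r : RuleName)
    (hr : r = RuleName.weak ∨ r = RuleName.cont ∨ r = RuleName.orR ∨
          r = RuleName.boxR ∨ r = RuleName.diaR ∨ r = RuleName.impR ∨
          r = RuleName.andL ∨ r = RuleName.diaL ∨ r = RuleName.boxL)
    (Γ₁ Γ₂ : FullSeq) (h : Step r [Γ₁] Γ₂) :
    Hck X (Γ₁.fm.imp Γ₂.fm) := by
  rcases hr with rfl | rfl | rfl | rfl | rfl | rfl | rfl | rfl | rfl
  · cases h with
    | weak Γ Δ => exact inCtx_anti Γ (toTop X Δ.fm)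
  · cases h with
    | cont Γ Δ => exact inCtx_anti Γ (dupT X Δ.fm)
  · cases h with
    | orR1 Γ A B => exact fillR_mono Γ (Hck.orI1 A B)
    | orR2 Γ A B => exact fillR_mono Γ (Hck.orI2 A B)
  · cases h with
    | boxR Γ A => exact fillR_mono Γ (boxMono (topElimImp X A))
  · cases h with
    | diaR Γ Δ A => exact fillRtoF Γ (Hck.k2 Δ.fm A)
  · cases h with
    | impR Γ A B => exact fillFtoR Γ (hck_id X (A.imp B))
  · cases h with
    | andL Γ A B => exact inCtx_anti Γ (hck_id X (A.and B))
  · cases h with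
    | diaL Γ A => exact inCtx_anti Γ (hck_id X A.dia)
  · cases h with
    | boxLIn Γ Δ A =>
        exact inCtx_anti Γ (uncurryT (imp_trans
          ((Hck.k1 A (Δ.fm.imp (A.and Δ.fm))).mp (Hck.nec (Hck.andI A Δ.fm)))
          (Hck.k2 Δ.fm (A.and Δ.fm))))
    | boxLOut Γ Δ A =>
        exact fillRtoF Γ (imp_trans (boxMono (curryT X A Δ.L.fm Δ.R.fm))
          (Hck.k1 A (Δ.L.fm.imp Δ.R.fm)))
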